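/- arXiv:1508.02487 — 4 statements merged into one kernel-verified Lean document; each statement's English description precedes it below -/
import Mathlib

section
/- The matrix A_d, viewed as a complex matrix, has an eigenvalue λ with strictly positive real part; hence the linear system ẋ = A_d x (the open-loop lateral/directional dynamics of the damaged aircraft) is not stable. -/
/-!
The characteristic polynomial of `Ad` is `μ · q(μ)` with
`q(μ) = μ³ + 0.8566 μ² + 0.00249984 μ + 0.20096406`. Since `q(-2) < 0 < q(-1)`, `q` has a real
root `r < -1`. The roots of `q` sum to `-0.8566`, so the remaining two roots of `q` have real parts
summing to `-0.8566 - r > 0`, and one of them lies in the open right half-plane.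
-/

open Matrix

/-- The damaged-aircraft lateral/directional state matrix. -/
def Ad : Matrix (Fin 4) (Fin 4) ℝ :=
  !![0, 1, 0, 0;
     0, -0.8566, -2.7681, 0.1008;
     0.0478, 0, 0, -1;
     0, -0.0248, 0, 0]

theorem Matrix.exists_mulVec_eq_smul_of_det_eq_zero {n A : Type*} [Fintype n] [DecidableEq n]
    [CommRing A] [IsDomain A] (M : Matrix n n A) {μ : A} (h : (μ • 1 - M).det = 0) :
    ∃ x ≠ 0, M *ᵥ x = μ • x := by
  obtain ⟨x, hx, hMx⟩ := exists_mulVec_eq_zero_iff.mpr h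
  refine ⟨x, hx, ?_⟩
  rwa [sub_mulVec, smul_mulVec, one_mulVec, sub_eq_zero, eq_comm] at hMx

namespace Complex

theorem exists_sq_eq_and_re_nonneg (d : ℂ) : ∃ s : ℂ, 0 ≤ s.re ∧ s ^ 2 = d := by
  obtain ⟨s, hs⟩ := IsAlgClosed.exists_pow_nat_eq d two_pos
  rcases le_total 0 s.re with hre | hre
  · exact ⟨s, hre, hs⟩
  · exact ⟨-s, by simpa using hre, by rw [neg_sq, hs]⟩

theorem exists_re_pos_root_of_quadratic {b : ℂ} (c : ℂ) (hb : b.re < 0) :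
    ∃ z : ℂ, 0 < z.re ∧ z ^ 2 + b * z + c = 0 := by
  obtain ⟨s, hs_re, hs⟩ := exists_sq_eq_and_re_nonneg (b ^ 2 - 4 * c)
  refine ⟨(-b + s) / 2, ?_, by linear_combination hs / 4⟩
  simp only [div_ofNat_re, add_re, neg_re]
  linarith

theorem exists_re_pos_root_of_cubic {a r : ℂ} (b c : ℂ) (hr : r ^ 3 + a * r ^ 2 + b * r + c = 0)
    (hra : (r + a).re < 0) :
    ∃ z : ℂ, 0 < z.re ∧ z ^ 3 + a * z ^ 2 + b * z + c = 0 := by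
  -- `z³ + a z² + b z + c = (z - r) (z² + (r + a) z + (b + a r + r²))` since `r` is a root.
  obtain ⟨z, hz_re, hz⟩ := exists_re_pos_root_of_quadratic (b + a * r + r ^ 2) hra
  exact ⟨z, hz_re, by linear_combination (z - r) * hz + hr⟩

end Complex

theorem det_smul_one_sub_Ad (μ : ℂ) :
    (μ • 1 - Ad.map Complex.ofReal).det =
      μ * (μ ^ 3 + 4283 / 5000 * μ ^ 2 + 1953 / 781250 * μ + 10048203 / 50000000) := by
  simp [Ad, det_succ_row_zero, Fin.sum_univ_succ, Fin.succAbove, one_apply]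
  ring

theorem exists_root_lt_neg_one :
    ∃ r : ℝ, r < -1 ∧ r ^ 3 + 4283 / 5000 * r ^ 2 + 1953 / 781250 * r + 10048203 / 50000000 = 0 := by
  have hcont : ContinuousOn (fun t : ℝ => t ^ 3 + 4283 / 5000 * t ^ 2 + 1953 / 781250 * t
      + 10048203 / 50000000) (Set.Icc (-2) (-1)) := by fun_prop
  obtain ⟨r, hr, hqr⟩ := intermediate_value_Ioo (by norm_num) hcont
    (show (0 : ℝ) ∈ Set.Ioo _ _ by norm_num)
  exact ⟨r, hr.2, hqr⟩

/-- `Ad`, viewed as a complex matrix, has an eigenvalue with strictly positive real part;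
hence the open-loop lateral/directional dynamics `ẋ = Ad x` of the damaged aircraft
are not stable. -/
theorem Ad_has_unstable_eigenvalue :
    ∃ lam : ℂ, 0 < lam.re ∧
      ∃ x : Fin 4 → ℂ, x ≠ 0 ∧ (Ad.map (Complex.ofReal)).mulVec x = lam • x := by
  obtain ⟨r, hr, hqr⟩ := exists_root_lt_neg_one
  obtain ⟨z, hz_re, hqz⟩ := Complex.exists_re_pos_root_of_cubic (a := 4283 / 5000) (r := r)
    (1953 / 781250) (10048203 / 50000000) (by simpa using congrArg Complex.ofReal hqr)
    (by norm_num; linarith)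
  refine ⟨z, hz_re, (Ad.map Complex.ofReal).exists_mulVec_eq_smul_of_det_eq_zero ?_⟩
  rw [det_smul_one_sub_Ad, hqz, mul_zero]
end

section
/- The matrix A_d has a pair of non-real complex conjugate eigenvalues λ and conj(λ) (the Dutch-roll mode) satisfying Re(λ) ∈ (0.08, 0.10) and |λ| ∈ (0.43, 0.45); in particular the Dutch-roll mode of the damaged aircraft is unstable. -/
/-!
The characteristic polynomial of `Ad` is `λ (λ³ + 0.8566 λ² + 0.00249984 λ + 0.20096406)`.
By the intermediate value theorem the cubic factor has a real root `r ≈ -1.040`; dividing it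
off leaves `λ² + (0.8566 + r) λ + 0.00249984 + r (0.8566 + r)`, whose discriminant is negative.
Its roots `λ, conj λ` therefore have real part `-(0.8566 + r)/2 ≈ 0.092` and modulus
`√(0.00249984 + r (0.8566 + r)) ≈ 0.44`, and since `Ad` is real, conjugating an eigenvector
for `λ` gives one for `conj λ`.
-/

open Matrix ComplexConjugate

theorem Matrix.exists_mulVec_eq_conj_smul_of_real {n : Type*} [Fintype n] (A : Matrix n n ℝ)
    {μ : ℂ} (h : ∃ x : n → ℂ, x ≠ 0 ∧ A.map Complex.ofReal *ᵥ x = μ • x) :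
    ∃ y : n → ℂ, y ≠ 0 ∧ A.map Complex.ofReal *ᵥ y = conj μ • y := by
  obtain ⟨x, hx0, hx⟩ := h
  refine ⟨conj ∘ x, fun h ↦ hx0 ?_, ?_⟩
  · simpa [Function.comp_def, funext_iff] using h
  · ext i
    have h := congrArg conj (congrFun hx i)
    rw [RingHom.map_mulVec] at h
    simpa [Matrix.map_map, Function.comp_def] using h

def lateralCubic {K : Type*} [Field K] (z : K) : K :=
  z ^ 3 + 0.8566 * z ^ 2 + 0.00249984 * z + 0.20096406

theorem lateralCubic_ofReal (r : ℝ) : lateralCubic (r : ℂ) = lateralCubic r := by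
  simp [lateralCubic]

theorem exists_lateralCubic_eq_zero_mem_Ioo :
    ∃ r ∈ Set.Ioo (-1.041 : ℝ) (-1.039), lateralCubic r = 0 := by
  have hcont : ContinuousOn (lateralCubic (K := ℝ)) (Set.Icc (-1.041) (-1.039)) := by
    unfold lateralCubic; fun_prop
  exact intermediate_value_Ioo (by norm_num) hcont
    ⟨by norm_num [lateralCubic], by norm_num [lateralCubic]⟩

-- The eigenvector is forced by rows 0, 2 and 3 of `Ad - μ`; row 1 then reads `μ · lateralCubic μ = 0`.
theorem exists_Ad_mulVec_eq_smul {μ : ℂ} (hμ0 : μ ≠ 0) (hμ : lateralCubic μ = 0) :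
    ∃ x : Fin 4 → ℂ, x ≠ 0 ∧ Ad.map Complex.ofReal *ᵥ x = μ • x := by
  refine ⟨![μ ^ 2, μ ^ 3, 0.0726 * μ, -0.0248 * μ ^ 2],
    fun h ↦ hμ0 (pow_eq_zero_iff two_ne_zero |>.1 (congrFun h 0)), ?_⟩
  ext i
  rw [lateralCubic] at hμ
  fin_cases i <;> simp [Ad, mulVec, dotProduct, Fin.sum_univ_four] <;>
    [ring; linear_combination -μ * hμ; ring; ring]

theorem cubic_eq_zero_of_quadratic_factor {R : Type*} [CommRing R] {p q s r z : R}
    (hr : r ^ 3 + p * r ^ 2 + q * r + s = 0)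
    (hz : z ^ 2 + (p + r) * z + (q + r * (p + r)) = 0) :
    z ^ 3 + p * z ^ 2 + q * z + s = 0 := by
  linear_combination (z - r) * hz + hr

theorem Complex.exists_quadratic_root_of_discrim_neg {b c : ℝ} (h : b ^ 2 < 4 * c) :
    ∃ z : ℂ, z.im ≠ 0 ∧ z.re = -b / 2 ∧ ‖z‖ = √c ∧ z ^ 2 + b * z + c = 0 := by
  have hd : 0 < 4 * c - b ^ 2 := by linarith
  have hd_sq : √(4 * c - b ^ 2) ^ 2 = 4 * c - b ^ 2 := Real.sq_sqrt hd.le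
  refine ⟨⟨-b / 2, √(4 * c - b ^ 2) / 2⟩, by simpa using (Real.sqrt_pos.2 hd).ne', rfl, ?_, ?_⟩
  · rw [Complex.norm_def, Complex.normSq_mk]
    congr 1
    linear_combination hd_sq / 4
  · rw [sq]
    apply Complex.ext
    · simp only [add_re, mul_re, ofReal_re, ofReal_im, zero_mul, sub_zero, zero_re]
      linear_combination -hd_sq / 4
    · simp only [add_im, mul_im, ofReal_re, ofReal_im, zero_mul, add_zero, zero_im]
      ring

/-- `Ad` has a pair of non-real complex-conjugate eigenvalues `lam` and `conj lam`
(the Dutch-roll mode) with `Re lam ∈ (0.08, 0.10)` and `|lam| ∈ (0.43, 0.45)`;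
in particular the Dutch-roll mode of the damaged aircraft is unstable. -/
theorem Ad_dutch_roll_eigenvalues :
    ∃ lam : ℂ, lam.im ≠ 0 ∧
      lam.re ∈ Set.Ioo (0.08 : ℝ) (0.10 : ℝ) ∧
      ‖lam‖ ∈ Set.Ioo (0.43 : ℝ) (0.45 : ℝ) ∧
      (∃ x : Fin 4 → ℂ, x ≠ 0 ∧ (Ad.map (Complex.ofReal)).mulVec x = lam • x) ∧
      (∃ y : Fin 4 → ℂ, y ≠ 0 ∧
        (Ad.map (Complex.ofReal)).mulVec y = (starRingEnd ℂ) lam • y) := by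
  obtain ⟨r, ⟨hr_lo, hr_hi⟩, hr⟩ := exists_lateralCubic_eq_zero_mem_Ioo
  obtain ⟨lam, him, hre, hnorm, hquad⟩ := Complex.exists_quadratic_root_of_discrim_neg
    (b := 0.8566 + r) (c := 0.00249984 + r * (0.8566 + r)) (by nlinarith)
  have hlam : lateralCubic lam = 0 := by
    have hrC : lateralCubic (r : ℂ) = 0 := by rw [lateralCubic_ofReal, hr, Complex.ofReal_zero]
    unfold lateralCubic at hrC ⊢
    push_cast at hquad
    exact cubic_eq_zero_of_quadratic_factor hrC hquad
  have hx := exists_Ad_mulVec_eq_smul (fun h ↦ him (by simp [h])) hlam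
  refine ⟨lam, him, ?_, ?_, hx, Ad.exists_mulVec_eq_conj_smul_of_real hx⟩
  · rw [hre]
    constructor <;> linarith
  · rw [hnorm]
    constructor
    · exact Real.lt_sqrt (by norm_num) |>.2 (by nlinarith)
    · exact Real.sqrt_lt' (by norm_num) |>.2 (by nlinarith)
end

section
/- There exists an initial state x₀ ∈ ℝ⁴ such that the solution t ↦ exp(t·A_d)·x₀ of the open-loop system ẋ = A_d x is unbounded as t → ∞ (the damaged aircraft's open-loop response diverges). -/
/-!
The characteristic polynomial of `Ad` is `λ (λ³ + 0.8566 λ² + 0.00249984 λ + 0.20096406)`. The cubic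
has a real root `r ≤ -1`, so its two other roots have real parts summing to `-0.8566 - r > 0` and one
of them, `l`, has positive real part. If `v` is a complex eigenvector for `l`, then `exp (t • Ad)`
applied to `Re v` and `Im v` recombines to `e^{t l} v`, whose norm grows like `e^{t Re l}`; hence
one of these two real trajectories is unbounded.
-/

open Matrix

namespace Matrix

variable {n : Type*} [Fintype n]

theorem norm_map_ofReal_mulVec_le (M : Matrix n n ℝ) (v : n → ℂ) :
    ‖M.map (↑) *ᵥ v‖ ≤ ‖M *ᵥ fun j => (v j).re‖ + ‖M *ᵥ fun j => (v j).im‖ := by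
  refine pi_norm_le_iff_of_nonneg (by positivity) |>.mpr fun i => ?_
  have hsplit : (M.map (↑) *ᵥ v) i =
      ((M *ᵥ fun j => (v j).re) i : ℂ) + ((M *ᵥ fun j => (v j).im) i : ℂ) * Complex.I := by
    simp only [mulVec, dotProduct, map_apply]
    push_cast
    rw [Finset.sum_mul, ← Finset.sum_add_distrib]
    refine Finset.sum_congr rfl fun j _ => ?_
    conv_lhs => rw [← Complex.re_add_im (v j)]
    ring
  calc ‖(M.map (↑) *ᵥ v) i‖
      ≤ ‖(M *ᵥ fun j => (v j).re) i‖ + ‖(M *ᵥ fun j => (v j).im) i‖ := by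
        rw [hsplit]
        refine (norm_add_le _ _).trans_eq ?_
        rw [norm_mul, Complex.norm_I, mul_one, Complex.norm_real, Complex.norm_real]
    _ ≤ _ := add_le_add (norm_le_pi_norm _ i) (norm_le_pi_norm _ i)

variable [DecidableEq n]

open scoped Norms.Operator

theorem pow_mulVec_of_mulVec_eq_smul {R : Type*} [CommSemiring R] {M : Matrix n n R} {v : n → R}
    {l : R} (h : M *ᵥ v = l • v) (k : ℕ) : M ^ k *ᵥ v = l ^ k • v := by
  induction k with
  | zero => simp
  | succ k ih => rw [pow_succ', ← mulVec_mulVec, ih, mulVec_smul, h, smul_smul, ← pow_succ]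

theorem exp_mulVec_of_mulVec_eq_smul {𝕂 : Type*} [RCLike 𝕂] {M : Matrix n n 𝕂} {v : n → 𝕂}
    {l : 𝕂} (h : M *ᵥ v = l • v) : NormedSpace.exp M *ᵥ v = NormedSpace.exp l • v := by
  have hM := (NormedSpace.exp_series_hasSum_exp' (𝕂 := 𝕂) M).map (mulVec.addMonoidHomLeft v)
    (continuous_id.matrix_mulVec continuous_const)
  have hl := (NormedSpace.exp_series_hasSum_exp' (𝕂 := 𝕂) l).smul_const v
  refine hM.unique (hl.congr_fun fun k => ?_)
  change ((k.factorial : 𝕂)⁻¹ • M ^ k) *ᵥ v = _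
  rw [smul_mulVec, pow_mulVec_of_mulVec_eq_smul h, smul_assoc]

theorem exp_map_ofReal (A : Matrix n n ℝ) :
    (NormedSpace.exp A).map ((↑) : ℝ → ℂ) = NormedSpace.exp (A.map (↑)) := by
  exact NormedSpace.map_exp Complex.ofRealHom.mapMatrix
    (continuous_id.matrix_map Complex.continuous_ofReal) A

theorem exists_unbounded_exp_smul_mulVec_of_eigenvalue_re_pos {A : Matrix n n ℝ} {l : ℂ} {v : n → ℂ}
    (hl : 0 < l.re) (hv : v ≠ 0) (hAv : A.map (↑) *ᵥ v = l • v) :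
    ∃ x₀ : n → ℝ, ¬ ∃ C : ℝ, ∀ t : ℝ, 0 ≤ t → ‖NormedSpace.exp (t • A) *ᵥ x₀‖ ≤ C := by
  by_contra! hbdd
  obtain ⟨CR, hCR⟩ := hbdd fun j => (v j).re
  obtain ⟨CI, hCI⟩ := hbdd fun j => (v j).im
  have hgrowth : ∀ t : ℝ, 0 ≤ t → Real.exp (t * l.re) * ‖v‖ ≤ CR + CI := by
    intro t ht
    have htraj : (NormedSpace.exp (t • A)).map (↑) *ᵥ v = Complex.exp (t * l) • v := by
      rw [exp_map_ofReal, Complex.exp_eq_exp_ℂ]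
      refine exp_mulVec_of_mulVec_eq_smul ?_
      rw [show (t • A).map ((↑) : ℝ → ℂ) = (t : ℂ) • A.map (↑) by ext; simp, smul_mulVec, hAv,
        smul_smul]
    calc Real.exp (t * l.re) * ‖v‖ = ‖(NormedSpace.exp (t • A)).map (↑) *ᵥ v‖ := by
          rw [htraj, norm_smul, Complex.norm_exp, Complex.re_ofReal_mul]
      _ ≤ CR + CI := (norm_map_ofReal_mulVec_le _ v).trans (add_le_add (hCR t ht) (hCI t ht))
  have hunbdd : Filter.Tendsto (fun t : ℝ => Real.exp (t * l.re) * ‖v‖) Filter.atTop Filter.atTop :=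
    (Real.tendsto_exp_atTop.comp (Filter.tendsto_id.atTop_mul_const hl)).atTop_mul_const
      (norm_pos_iff.mpr hv)
  obtain ⟨t, ht, hCt⟩ :=
    ((Filter.eventually_ge_atTop 0).and (hunbdd.eventually_gt_atTop (CR + CI))).exists
  exact (hgrowth t ht).not_gt hCt

end Matrix

theorem Complex.exists_quadratic_eq_zero_re_pos {b c : ℂ} (hb : b.re < 0) :
    ∃ z : ℂ, 0 < z.re ∧ z ^ 2 + b * z + c = 0 := by
  obtain ⟨s, hs⟩ := IsAlgClosed.exists_eq_mul_self (discrim 1 b c)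
  obtain ⟨μ, hμ⟩ := exists_quadratic_eq_zero one_ne_zero ⟨s, hs⟩
  by_cases hμre : 0 < μ.re
  · exact ⟨μ, hμre, by linear_combination hμ⟩
  · refine ⟨-b - μ, ?_, by linear_combination hμ⟩
    simp only [sub_re, neg_re]
    linarith

theorem Ad_cubic_exists_root_le_neg_one :
    ∃ r : ℝ, r ≤ -1 ∧ r ^ 3 + 0.8566 * r ^ 2 + 0.00249984 * r + 0.20096406 = 0 := by
  have hcont : ContinuousOn (fun x : ℝ => x ^ 3 + 0.8566 * x ^ 2 + 0.00249984 * x + 0.20096406)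
      (Set.Icc (-2) (-1)) := by fun_prop
  obtain ⟨r, hr, hroot⟩ := intermediate_value_Icc (by norm_num) hcont
    (show (0 : ℝ) ∈ Set.Icc _ _ by constructor <;> norm_num)
  exact ⟨r, hr.2, hroot⟩

theorem Ad_cubic_exists_root_re_pos :
    ∃ l : ℂ, 0 < l.re ∧ l ^ 3 + 0.8566 * l ^ 2 + 0.00249984 * l + 0.20096406 = 0 := by
  obtain ⟨r, hr, hroot⟩ := Ad_cubic_exists_root_le_neg_one
  have hroot' : (r : ℂ) ^ 3 + 0.8566 * r ^ 2 + 0.00249984 * r + 0.20096406 = 0 := by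
    simpa using congrArg ((↑) : ℝ → ℂ) hroot
  obtain ⟨l, hl, hquad⟩ := Complex.exists_quadratic_eq_zero_re_pos
    (b := 0.8566 + r) (c := 0.00249984 + 0.8566 * r + r ^ 2) (by norm_num; linarith)
  exact ⟨l, hl, by linear_combination (l - r) * hquad + hroot'⟩

-- Rows 1, 3 and 4 of `Ad v = l v` fix `v` up to scale; row 2 then says that `l` is a root of the cubic.
theorem Ad_map_mulVec_eigenvector {l : ℂ}
    (hl : l ^ 3 + 0.8566 * l ^ 2 + 0.00249984 * l + 0.20096406 = 0) :
    Ad.map (↑) *ᵥ ![l, l ^ 2, 0.0726, -0.0248 * l] = l • ![l, l ^ 2, 0.0726, -0.0248 * l] := by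
  ext i
  fin_cases i <;> simp [Ad, mulVec, dotProduct, Fin.sum_univ_four]
  · ring
  · linear_combination -hl
  · ring
  · ring

/-- There is an initial state `x₀ ∈ ℝ⁴` whose open-loop trajectory
`t ↦ exp (t • Ad) x₀` is unbounded as `t → ∞`:
the damaged aircraft's open-loop response diverges. -/
theorem Ad_open_loop_unbounded :
    ∃ x₀ : Fin 4 → ℝ,
      ¬ ∃ C : ℝ, ∀ t : ℝ, 0 ≤ t →
        ‖(NormedSpace.exp (t • Ad)).mulVec x₀‖ ≤ C := by
  obtain ⟨l, hl, hroot⟩ := Ad_cubic_exists_root_re_pos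
  refine exists_unbounded_exp_smul_mulVec_of_eigenvalue_re_pos hl (fun hv => ?_)
    (Ad_map_mulVec_eigenvector hroot)
  norm_num [funext_iff, Fin.forall_fin_succ] at hv
end

section
/- The 4×4 matrix [B_d | A_d·B_d], obtained by concatenating the columns of B_d and of A_d·B_d, has rank 4; consequently the Kalman controllability matrix [B_d, A_d B_d, A_d² B_d, A_d³ B_d] has full rank 4, i.e., the damaged-aircraft pair (A_d, B_d) is controllable with aileron and differential-thrust inputs. -/
/-!
Already the first two blocks `[Bd | Ad·Bd]` of the Kalman matrix are invertible. Rows 1 and 3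
(counting from 1) of `Bd` vanish, while rows 1 and 3 of `Ad·Bd` are row 2 and minus row 4 of `Bd`;
so up to a row swap `[Bd | Ad·Bd]` is block anti-triangular with both off-diagonal blocks equal,
up to sign, to the minor `D` of `Bd` on rows 2 and 4, and its determinant is `D² ≠ 0`. Appending
further columns to a matrix of full row rank keeps its rank.
-/

open Matrix

/-- The damaged-aircraft input matrix (aileron deflection and differential thrust). -/
def Bd : Matrix (Fin 4) (Fin 2) ℝ :=
  !![0, 0;
     0.2249, 0.0142;
     0, 0;
     0.0118, 0.6784]

namespace Matrix

variable {R m n₁ n₂ : Type*} [CommSemiring R] [StrongRankCondition R] [Fintype n₁] [Fintype n₂]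

theorem rank_le_rank_fromCols_left (A : Matrix m n₁ R) (B : Matrix m n₂ R) :
    A.rank ≤ (fromCols A B).rank :=
  rank_submatrix_le (fromCols A B) id Sum.inl

theorem rank_fromCols_of_rank_left_eq_card [Fintype m] {A : Matrix m n₁ R} (B : Matrix m n₂ R)
    (hA : A.rank = Fintype.card m) : (fromCols A B).rank = Fintype.card m :=
  (rank_le_card_height _).antisymm (hA ▸ rank_le_rank_fromCols_left A B)

theorem rank_eq_card_of_det_submatrix_ne_zero {K m n : Type*} [Field K] [Fintype m] [Fintype n]
    [DecidableEq m] (M : Matrix m n K) (e : m ≃ n) (h : (M.submatrix (Equiv.refl m) e).det ≠ 0) :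
    M.rank = Fintype.card m := by
  rw [← rank_submatrix M (Equiv.refl m) e]
  exact rank_of_isUnit _ ((isUnit_iff_isUnit_det _).mpr h.isUnit)

end Matrix

theorem fromCols_Bd_AdBd_submatrix :
    (fromCols Bd (Ad * Bd)).submatrix (Equiv.refl (Fin 4)) (finSumFinEquiv (m := 2) (n := 2)).symm =
      !![0, 0, 0.2249, 0.0142;
         0.2249, 0.0142, -0.1914599, 0.0562190;
         0, 0, -0.0118, -0.6784;
         0.0118, 0.6784, -0.00557752, -0.00035216] := by
  ext i j
  fin_cases i <;> fin_cases j <;>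
    norm_num [Ad, Bd, mul_apply, Fin.sum_univ_four, finSumFinEquiv, Fin.addCases, Fin.castLT,
      Fin.subNat]

theorem det_fromCols_Bd_AdBd_submatrix :
    ((fromCols Bd (Ad * Bd)).submatrix (Equiv.refl (Fin 4))
      (finSumFinEquiv (m := 2) (n := 2)).symm).det = (0.2249 * 0.6784 - 0.0142 * 0.0118) ^ 2 := by
  rw [fromCols_Bd_AdBd_submatrix]
  simp [det_succ_row_zero, Fin.sum_univ_succ, Fin.succAbove]
  norm_num

/-- The 4×4 matrix `[Bd | Ad·Bd]` has rank 4; consequently the Kalman controllability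
matrix `[Bd, Ad·Bd, Ad²·Bd, Ad³·Bd]` has full rank 4, i.e. the damaged-aircraft pair
`(Ad, Bd)` is controllable with aileron and differential-thrust inputs. -/
theorem Ad_Bd_controllable :
    (fromCols Bd (Ad * Bd)).rank = 4 ∧
    (fromCols (fromCols Bd (Ad * Bd))
      (fromCols (Ad ^ 2 * Bd) (Ad ^ 3 * Bd))).rank = 4 := by
  have h : (fromCols Bd (Ad * Bd)).rank = 4 :=
    rank_eq_card_of_det_submatrix_ne_zero _ _
      (by rw [det_fromCols_Bd_AdBd_submatrix]; norm_num)
  exact ⟨h, rank_fromCols_of_rank_left_eq_card _ h⟩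
end
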